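/- Fan-out and parity are conjugate by Hadamards: for every n ≥ 1, H^{⊗(n+1)} * Fₙ * H^{⊗(n+1)} = Pₙ, where Fₙ is the fan-out gate on n+1 qubits, Pₙ is the parity (Mod₂) gate on n+1 qubits, and H^{⊗(n+1)} is the (n+1)-fold Kronecker product of the Hadamard matrix H = (1/√2)·[[1,1],[1,−1]]. -/

import Mathlib

open Matrix

/-- The Hadamard gate, with rows/columns indexed by `Bool`. -/
noncomputable def Hb : Matrix Bool Bool ℂ :=
  fun b c => ((1 / Real.sqrt 2 : ℝ) : ℂ) * (if b && c then -1 else 1)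

/-- The `(n+1)`-fold Kronecker product `H^{⊗(n+1)}` of the Hadamard gate, acting
on `n+1` qubits indexed as `(x, b)` with `x : Fin n → Bool` and `b : Bool`. -/
noncomputable def HN (n : ℕ) :
    Matrix ((Fin n → Bool) × Bool) ((Fin n → Bool) × Bool) ℂ :=
  fun p q => (∏ i, Hb (p.1 i) (q.1 i)) * Hb p.2 q.2

/-- The fan-out gate `Fₙ` on `n+1` qubits: the permutation matrix sending
`|x₁,…,xₙ, b⟩` to `|x₁⊕b,…,xₙ⊕b, b⟩`. -/
def Fanout (n : ℕ) : Matrix ((Fin n → Bool) × Bool) ((Fin n → Bool) × Bool) ℂ :=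
  fun p q => if p = (fun i => xor (q.1 i) q.2, q.2) then 1 else 0

/-- The parity (`Mod₂`) gate `Pₙ` on `n+1` qubits: the permutation matrix sending
`|x₁,…,xₙ, b⟩` to `|x₁,…,xₙ, b ⊕ x₁ ⊕ ⋯ ⊕ xₙ⟩`, i.e. flipping the target iff
`x₁ + ⋯ + xₙ` is odd. -/
def ParityGate (n : ℕ) : Matrix ((Fin n → Bool) × Bool) ((Fin n → Bool) × Bool) ℂ :=
  fun p q =>
    if p = (q.1, xor q.2 (decide ((Finset.univ.filter fun i => q.1 i = true).card % 2 = 1)))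
    then 1 else 0

/-!
Up to the factor `1/√2` per qubit, the Hadamard entry at `(b, c)` is the sign `(-1)^(b c)`, so
`H^{⊗(n+1)}` has entries `(-1)^(x·y + b c)`. Since `x·(y ⊕ c) = x·y + c |x|` mod 2, shifting the
column by the fan-out map equals shifting the row by the parity map: `H F = P H`. As `H² = 1`,
conjugating `F` by `H^{⊗(n+1)}` gives `P`.
-/

def boolSign {R : Type*} [One R] [Neg R] (b : Bool) : R := if b then -1 else 1

def parity {ι : Type*} [Fintype ι] (x : ι → Bool) : Bool :=
  decide ((Finset.univ.filter fun i => x i = true).card % 2 = 1)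

section BoolSign

variable {R : Type*} [CommMonoid R] [HasDistribNeg R]

theorem boolSign_xor (a b : Bool) : (boolSign (xor a b) : R) = boolSign a * boolSign b := by
  cases a <;> cases b <;> simp [boolSign]

theorem prod_boolSign {ι : Type*} [Fintype ι] (x : ι → Bool) :
    ∏ i, (boolSign (x i) : R) = boolSign (parity x) := by
  simp only [boolSign, parity, Finset.prod_ite, Finset.prod_const, one_pow, mul_one,
    neg_one_pow_eq_ite, Nat.even_iff]
  rcases Nat.mod_two_eq_zero_or_one (Finset.univ.filter fun i => x i = true).card with h | h <;>
    simp [h]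

theorem prod_boolSign_and {ι : Type*} [Fintype ι] (x : ι → Bool) (c : Bool) :
    ∏ i, (boolSign (x i && c) : R) = boolSign (parity x && c) := by
  cases c
  · simp [boolSign]
  · simpa using prod_boolSign x

end BoolSign

namespace Matrix

variable {ι α β γ R : Type*} [Fintype ι] [CommSemiring R]

def kroneckerPow (A : Matrix α β R) (ι : Type*) [Fintype ι] : Matrix (ι → α) (ι → β) R :=
  of fun p q => ∏ i, A (p i) (q i)

theorem kroneckerPow_mul [DecidableEq ι] [Fintype β] (A : Matrix α β R) (B : Matrix β γ R) :
    kroneckerPow A ι * kroneckerPow B ι = kroneckerPow (A * B) ι := by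
  ext p q
  simp only [kroneckerPow, of_apply, mul_apply, Finset.prod_univ_sum, Fintype.piFinset_univ,
    ← Finset.prod_mul_distrib]

theorem kroneckerPow_one [DecidableEq α] : kroneckerPow (1 : Matrix α α R) ι = 1 := by
  classical
  ext p q
  simp only [kroneckerPow, of_apply, one_apply, Finset.prod_boole, Finset.mem_univ, true_implies,
    funext_iff]

theorem mul_apply_of_eq_ite [Fintype β] [DecidableEq β] {M : Matrix β γ R} {f : γ → β}
    (hM : ∀ r q, M r q = if r = f q then 1 else 0) (A : Matrix α β R) (p : α) (q : γ) :
    (A * M) p q = A p (f q) := by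
  simp [mul_apply, hM]

theorem apply_mul_of_eq_ite_of_involutive [Fintype α] [DecidableEq α] {M : Matrix α α R}
    {g : α → α} (hg : Function.Involutive g) (hM : ∀ p r, M p r = if p = g r then 1 else 0)
    (A : Matrix α β R) (p : α) (q : β) :
    (M * A) p q = A (g p) q := by
  have hpg : ∀ r, p = g r ↔ r = g p := fun r =>
    ⟨fun h => h ▸ (hg r).symm, fun h => h ▸ (hg p).symm⟩
  simp [mul_apply, hM, hpg]

end Matrix

open Matrix
open scoped Kronecker

theorem Hb_apply (b c : Bool) : Hb b c = ((1 / Real.sqrt 2 : ℝ) : ℂ) * boolSign (b && c) := rfl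

theorem Hb_mul_self : Hb * Hb = 1 := by
  have h : ((Real.sqrt 2 : ℝ) : ℂ) ^ 2 = 2 := by
    rw [← Complex.ofReal_pow, Real.sq_sqrt zero_le_two]
    push_cast
    ring
  ext b c
  cases b <;> cases c <;> simp [mul_apply, Hb, ← sq, h]

theorem HN_eq_kroneckerPow_kronecker (n : ℕ) : HN n = kroneckerPow Hb (Fin n) ⊗ₖ Hb := rfl

theorem HN_mul_self (n : ℕ) : HN n * HN n = 1 := by
  rw [HN_eq_kroneckerPow_kronecker, ← mul_kronecker_mul, kroneckerPow_mul, Hb_mul_self,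
    kroneckerPow_one, one_kronecker_one]

def fanoutMap {ι : Type*} (q : (ι → Bool) × Bool) : (ι → Bool) × Bool :=
  (fun i => xor (q.1 i) q.2, q.2)

def parityMap {ι : Type*} [Fintype ι] (q : (ι → Bool) × Bool) : (ι → Bool) × Bool :=
  (q.1, xor q.2 (parity q.1))

theorem parityMap_involutive {ι : Type*} [Fintype ι] :
    Function.Involutive (parityMap : (ι → Bool) × Bool → (ι → Bool) × Bool) := by
  rintro ⟨x, b⟩
  simp [parityMap]

theorem HN_apply_fanoutMap (n : ℕ) (p q : (Fin n → Bool) × Bool) :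
    HN n p (fanoutMap q) = HN n (parityMap p) q := by
  obtain ⟨x, b⟩ := p
  obtain ⟨y, c⟩ := q
  simp only [HN, fanoutMap, parityMap, Hb_apply, Bool.and_xor_distrib_left,
    Bool.and_xor_distrib_right, boolSign_xor, Finset.prod_mul_distrib, prod_boolSign_and]
  ring

theorem HN_mul_Fanout (n : ℕ) : HN n * Fanout n = ParityGate n * HN n := by
  ext p q
  rw [mul_apply_of_eq_ite (M := Fanout n) (f := fanoutMap) (fun _ _ => rfl),
    apply_mul_of_eq_ite_of_involutive (M := ParityGate n) parityMap_involutive (fun _ _ => rfl),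
    HN_apply_fanoutMap]

theorem fanout_conj_hadamard_eq_parity_general (n : ℕ) :
    HN n * Fanout n * HN n = ParityGate n := by
  rw [HN_mul_Fanout, Matrix.mul_assoc, HN_mul_self, Matrix.mul_one]

/-- Fan-out and parity are conjugate by Hadamards:
`H^{⊗(n+1)} * Fₙ * H^{⊗(n+1)} = Pₙ` for every `n ≥ 1`. -/
theorem fanout_conj_hadamard_eq_parity (n : ℕ) (hn : 1 ≤ n) :
    HN n * Fanout n * HN n = ParityGate n :=
  fanout_conj_hadamard_eq_parity_general n
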